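/- arXiv:1908.10081 — 2 statements merged into one kernel-verified Lean document; each statement's English description precedes it below -/
import Mathlib

section
/- Let (X, {R_i}) be a symmetric association scheme of D classes and fix indices r, s, t, i, j, k. Suppose that [i j k]_{x,y,z} = 0 for all vertices x, y, z with (x,y) ∈ R_r, (x,z) ∈ R_s, (y,z) ∈ R_t. Then [k s t]_{w,x,y} = 0 for all vertices w, x, y with (w,x) ∈ R_i, (w,y) ∈ R_j and (x,y) ∈ R_r. -/
open Matrix BigOperators

/-- A symmetric association scheme of `D` classes on a finite vertex set `X`,
encoded by the function `rel` assigning to each pair of vertices the index of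
the relation containing it. -/
structure AssocScheme (D : ℕ) (X : Type) [Fintype X] where
  rel : X → X → Fin (D + 1)
  rel_symm : ∀ x y, rel x y = rel y x
  rel_diag : ∀ x y, rel x y = 0 ↔ x = y
  rel_surj : ∀ i : Fin (D + 1), ∃ x y, rel x y = i
  p : Fin (D + 1) → Fin (D + 1) → Fin (D + 1) → ℕ
  card_rel : ∀ (i j k : Fin (D + 1)) (x y : X), rel x y = k →
    (Finset.univ.filter fun z => rel x z = i ∧ rel z y = j).card = p i j k

/-- The 0-1 adjacency matrix of relation `i`. -/
def AssocScheme.A {D : ℕ} {X : Type} [Fintype X] (S : AssocScheme D X)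
    (i : Fin (D + 1)) : Matrix X X ℝ :=
  Matrix.of fun x y => if S.rel x y = i then (1 : ℝ) else 0

/-- The triple intersection number `[i j k]` with respect to vertices `x, y, z`. -/
def AssocScheme.triple {D : ℕ} {X : Type} [Fintype X] (S : AssocScheme D X)
    (x y z : X) (i j k : Fin (D + 1)) : ℕ :=
  (Finset.univ.filter fun w => S.rel x w = i ∧ S.rel y w = j ∧ S.rel z w = k).card

/-- The quadruple intersection number `[h i j k]` with respect to `w, x, y, z`. -/
def AssocScheme.quad {D : ℕ} {X : Type} [Fintype X] (S : AssocScheme D X)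
    (w x y z : X) (h i j k : Fin (D + 1)) : ℕ :=
  (Finset.univ.filter fun u =>
    S.rel u w = h ∧ S.rel u x = i ∧ S.rel u y = j ∧ S.rel u z = k).card


namespace AssocScheme

variable {D : ℕ} {X : Type} [Fintype X] (S : AssocScheme D X)

theorem triple_eq_zero_iff (x y z : X) (i j k : Fin (D + 1)) :
    S.triple x y z i j k = 0 ↔ ∀ w, ¬(S.rel x w = i ∧ S.rel y w = j ∧ S.rel z w = k) := by
  simp [triple, Finset.filter_eq_empty_iff]

end AssocScheme

/-- Corollary 4.2: if the triple intersection number `[i j k]_{x,y,z}` vanishes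
for all triples of vertices with `(x,y) ∈ R_r`, `(x,z) ∈ R_s`, `(y,z) ∈ R_t`,
then `[k s t]_{w,x,y}` vanishes for all `w, x, y` with `(w,x) ∈ R_i`,
`(w,y) ∈ R_j`, `(x,y) ∈ R_r`. -/
theorem triple_zero_transfer {D : ℕ} {X : Type} [Fintype X]
    (S : AssocScheme D X) (r s t i j k : Fin (D + 1))
    (h : ∀ x y z : X, S.rel x y = r → S.rel x z = s → S.rel y z = t →
      S.triple x y z i j k = 0) :
    ∀ w x y : X, S.rel w x = i → S.rel w y = j → S.rel x y = r →
      S.triple w x y k s t = 0 := by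
  intro w x y hwx hwy hxy
  rw [S.triple_eq_zero_iff]
  rintro z ⟨hwz, hxz, hyz⟩
  -- a vertex `z` counted by `[k s t]_{w,x,y}` makes `w` a vertex counted by `[i j k]_{x,y,z}`
  exact (S.triple_eq_zero_iff x y z i j k).mp (h x y z hxy hxz hyz) w
    ⟨S.rel_symm x w ▸ hwx, S.rel_symm y w ▸ hwy, S.rel_symm z w ▸ hwz⟩
end

section
/- Let E_p, E_r, E_s, E_t be real symmetric idempotent n×n matrices (i.e., each satisfies E² = E and Eᵀ = E). Then the sum of all entries of the entrywise (Hadamard) product E_p ∘ E_r ∘ E_s ∘ E_t is nonnegative; indeed it equals Σ_{w,x,y,z} σ(w,x,y,z)², where σ(w,x,y,z) = Σ_{u} E_p(u,w) E_r(u,x) E_s(u,y) E_t(u,z). -/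
open Matrix BigOperators

theorem sum_sq_sum_mul_eq_sum_hadamard_mul_transpose {R U W X Y Z : Type*} [CommSemiring R]
    [Fintype U] [Fintype W] [Fintype X] [Fintype Y] [Fintype Z]
    (A : Matrix U W R) (B : Matrix U X R) (C : Matrix U Y R) (D : Matrix U Z R) :
    ∑ w, ∑ x, ∑ y, ∑ z, (∑ u, A u w * B u x * C u y * D u z) ^ 2 =
      ∑ u, ∑ v, ((A * Aᵀ) ⊙ (B * Bᵀ) ⊙ (C * Cᵀ) ⊙ (D * Dᵀ)) u v :=
  calc _ = ∑ w, ∑ x, ∑ y, ∑ z, ∑ u, ∑ v,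
        A u w * A v w * (B u x * B v x) * (C u y * C v y) * (D u z * D v z) := by
        simp only [sq, Finset.sum_mul_sum]
        congr! 6
        ring
    _ = ∑ u, ∑ v, ∑ w, ∑ x, ∑ y, ∑ z,
        A u w * A v w * (B u x * B v x) * (C u y * C v y) * (D u z * D v z) := by
        -- pinning the index types makes each commutation one-way, so `simp` terminates
        simp only [Finset.sum_comm (γ := W) (α := U), Finset.sum_comm (γ := X) (α := U),
          Finset.sum_comm (γ := Y) (α := U), Finset.sum_comm (γ := Z) (α := U)]
    _ = _ := by
        simp only [hadamard_apply, mul_apply, transpose_apply, ← Finset.mul_sum, ← Finset.sum_mul]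

/-- For real symmetric idempotent matrices `E_p, E_r, E_s, E_t`, the sum of all
entries of the Hadamard product `E_p ∘ E_r ∘ E_s ∘ E_t` is nonnegative; indeed
it equals `Σ_{w,x,y,z} σ(w,x,y,z)²` where
`σ(w,x,y,z) = Σ_u E_p(u,w) E_r(u,x) E_s(u,y) E_t(u,z)`. -/
theorem entrySum_hadamard_idempotents_nonneg {X : Type} [Fintype X]
    (Ep Er Es Et : Matrix X X ℝ)
    (hEp : Ep * Ep = Ep) (hEpt : Epᵀ = Ep)
    (hEr : Er * Er = Er) (hErt : Erᵀ = Er)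
    (hEs : Es * Es = Es) (hEst : Esᵀ = Es)
    (hEt : Et * Et = Et) (hEtt : Etᵀ = Et) :
    0 ≤ ∑ x : X, ∑ y : X,
        Matrix.hadamard (Matrix.hadamard (Matrix.hadamard Ep Er) Es) Et x y ∧
    ∑ x : X, ∑ y : X,
        Matrix.hadamard (Matrix.hadamard (Matrix.hadamard Ep Er) Es) Et x y
      = ∑ w : X, ∑ x : X, ∑ y : X, ∑ z : X,
          (∑ u : X, Ep u w * Er u x * Es u y * Et u z) ^ 2 := by
  have key := sum_sq_sum_mul_eq_sum_hadamard_mul_transpose Ep Er Es Et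
  rw [hEpt, hEp, hErt, hEr, hEst, hEs, hEtt, hEt] at key
  refine ⟨?_, key.symm⟩
  rw [← key]
  exact Finset.sum_nonneg fun _ _ => Finset.sum_nonneg fun _ _ =>
    Finset.sum_nonneg fun _ _ => Finset.sum_nonneg fun _ _ => sq_nonneg _
end
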